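/- The function γ_Ω, extended to the diagonal by γ_Ω(x,x) := γ̃_Ω(x), is differentiable in its first variable on Ω × Ω, and for every x ∈ Ω one has ∇γ̃_Ω(x) = 2·∇₁γ_Ω(x,x), where ∇₁γ_Ω(x,x) denotes the gradient of the extended function in the first variable evaluated on the diagonal. -/

import Mathlib

open Complex Real

noncomputable section

/-- The gradient of a real-valued function on `ℂ ≅ ℝ²`, identified with the complex
number `∂₁ f + i·∂₂ f`. -/
def grad (f : ℂ → ℝ) (x : ℂ) : ℂ :=
  (fderiv ℝ f x 1 : ℂ) + (fderiv ℝ f x Complex.I : ℂ) * Complex.I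

/-- The regular part of the Green's function of `Ω`, expressed through the conformal map `φ`. -/
def gammaReg (φ : ℂ → ℂ) (x y : ℂ) : ℝ :=
  (1 / (2 * π)) * Real.log (‖φ x - φ y‖ / ‖x - y‖) -
    (1 / (2 * π)) * Real.log (‖1 - φ x * (starRingEnd ℂ) (φ y)‖)

/-- The Robin function of `Ω`. -/
def robin (φ : ℂ → ℂ) (x : ℂ) : ℝ :=
  (1 / (2 * π)) * Real.log (‖deriv φ x‖) -
    (1 / (2 * π)) * Real.log (1 - ‖φ x‖ ^ 2)

/-- The right-hand side of the Kirchhoff–Routh equation for the vortex located at `w₁`,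
with own strength `a₁`, the other vortex being at `w₂` with strength `a₂`. -/
def vortexRHS (φ : ℂ → ℂ) (a₁ a₂ : ℝ) (w₁ w₂ : ℂ) : ℂ :=
  ((a₁ : ℂ) / 2) * (Complex.I * grad (robin φ) w₁) +
    (a₂ : ℂ) * (Complex.I * (w₁ - w₂) / ((2 * π * ‖w₁ - w₂‖ ^ 2 : ℝ) : ℂ) +
      Complex.I * grad (fun x => gammaReg φ x w₂) w₁)

/-- The regular part of the Green's function, extended to the diagonal by the Robin function. -/
def gammaExt (φ : ℂ → ℂ) (x y : ℂ) : ℝ :=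
  if x = y then robin φ x else gammaReg φ x y

/-!
With `ψ_y := dslope φ y` (the difference quotient `(φ x - φ y) / (x - y)`, equal to `φ' y`
at `x = y`), the extended function is `(1/2π) (log |ψ_y x| - log |1 - φ x · conj (φ y)|)` on
all of `Ω × Ω`, diagonal included. Injectivity makes `ψ_y` zero-free: on the diagonal because a
univalent map has nonvanishing derivative (if `φ - φ x₀ = F ^ n` with `F` a local coordinate
and `n ≥ 2`, then `φ` identifies the preimages under `F` of `w` and `ζ w`, `ζ` an `n`-th root
of unity). So both logarithms are smooth, and the gradient of `log |h|` for holomorphic `h`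
is `conj (h' / h)`. The factor `2` comes from `φ'' x = 2 ψ_x' x` and from `1 - |φ z|²`
depending on `φ` through both `φ z` and `conj (φ z)`.
-/

open Filter Topology Set ComplexConjugate

/-- The real differential at `x` of `Re ∘ G` for a holomorphic `G` with `G' x = w`. -/
def reMulCLM (w : ℂ) : ℂ →L[ℝ] ℝ := reCLM ∘L (w • (1 : ℂ →L[ℝ] ℂ))

@[simp] lemma reMulCLM_apply (w v : ℂ) : reMulCLM w v = (w * v).re := rfl

lemma grad_eq_conj_of_hasFDerivAt {f : ℂ → ℝ} {x w : ℂ} (hf : HasFDerivAt f (reMulCLM w) x) :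
    grad f x = conj w := by
  simp [grad, hf.fderiv, Complex.ext_iff]

lemma HasFDerivAt.const_mul_sub_const_mul_reMulCLM {f g : ℂ → ℝ} {a b x : ℂ} (c : ℝ)
    (hf : HasFDerivAt f (reMulCLM a) x) (hg : HasFDerivAt g (reMulCLM b) x) :
    HasFDerivAt (fun z => c * f z - c * g z) (reMulCLM (c * (a - b))) x := by
  convert! (hf.const_mul c).sub (hg.const_mul c) using 1
  ext v
  simp [mul_assoc, sub_mul, mul_sub]

lemma HasDerivAt.hasFDerivAt_log_norm {h : ℂ → ℂ} {h' x : ℂ} (hh : HasDerivAt h h' x)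
    (hx : h x ≠ 0) :
    HasFDerivAt (fun z => Real.log ‖h z‖) (reMulCLM (h' / h x)) x := by
  have hsq := ((hh.hasFDerivAt.restrictScalars ℝ).norm_sq.log (by positivity)).const_mul (1 / 2)
  have hlog : (fun z => Real.log ‖h z‖) = fun z => 1 / 2 * Real.log (‖h z‖ ^ 2) := by
    funext z; rw [Real.log_pow]; ring
  rw [hlog]
  convert! hsq using 1
  ext v
  simp only [div_eq_mul_inv, reMulCLM_apply, mul_re, inv_re, normSq_eq_norm_sq, inv_im, neg_mul,
    mul_neg, sub_neg_eq_add, mul_im, one_mul, smul_apply, ContinuousLinearMap.comp_apply,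
    ContinuousLinearMap.coe_restrictScalars', ContinuousLinearMap.toSpanSingleton_apply,
    smul_eq_mul, coe_innerSL_apply, Complex.inner, conj_re, conj_im, smul_add, nsmul_eq_mul,
    Nat.cast_ofNat]
  field_simp
  ring

lemma HasDerivAt.hasFDerivAt_log_one_sub_norm_sq {h : ℂ → ℂ} {h' x : ℂ} (hh : HasDerivAt h h' x)
    (hx : ‖h x‖ ≠ 1) :
    HasFDerivAt (fun z => Real.log (1 - ‖h z‖ ^ 2))
      (reMulCLM (-2 * conj (h x) * h' / (1 - ‖h x‖ ^ 2))) x := by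
  have hx' : 1 - ‖h x‖ ^ 2 ≠ 0 := by
    contrapose! hx
    nlinarith [norm_nonneg (h x)]
  convert! ((hh.hasFDerivAt.restrictScalars ℝ).norm_sq.const_sub 1).log hx' using 1
  ext v
  have hcast : (1 : ℂ) - ‖h x‖ ^ 2 = ((1 - ‖h x‖ ^ 2 : ℝ) : ℂ) := by push_cast; rfl
  rw [hcast, reMulCLM_apply, div_mul_eq_mul_div, Complex.div_ofReal_re]
  simp only [neg_mul, neg_re, mul_re, re_ofNat, conj_re, im_ofNat, conj_im, mul_neg, zero_mul,
    neg_zero, sub_zero, mul_im, add_zero, sub_neg_eq_add, neg_sub, smul_neg, neg_apply, smul_apply,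
    ContinuousLinearMap.comp_apply, ContinuousLinearMap.coe_restrictScalars',
    ContinuousLinearMap.toSpanSingleton_apply, smul_eq_mul, coe_innerSL_apply, Complex.inner,
    smul_add, nsmul_eq_mul, Nat.cast_ofNat]
  field_simp
  ring

lemma AnalyticAt.exists_analyticAt_pow_eq {g : ℂ → ℂ} {x : ℂ} (hg : AnalyticAt ℂ g x)
    (hgx : g x ≠ 0) {n : ℕ} (hn : n ≠ 0) :
    ∃ r : ℂ → ℂ, AnalyticAt ℂ r x ∧ r x ≠ 0 ∧ ∀ z, r z ^ n = g z := by
  obtain ⟨c, hc⟩ := IsAlgClosed.exists_pow_nat_eq (g x) (Nat.pos_of_ne_zero hn)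
  have hc0 : c ≠ 0 := by rintro rfl; exact hgx (by rw [← hc, zero_pow hn])
  refine ⟨fun z => c * (g z / g x) ^ (n⁻¹ : ℂ), ?_, ?_, fun z => ?_⟩
  · refine analyticAt_const.mul ((hg.div_const).cpow analyticAt_const ?_)
    simp [hgx]
  · simp [hgx, hc0]
  · rw [mul_pow, Complex.cpow_nat_inv_pow _ hn, hc, mul_div_cancel₀ _ hgx]

lemma not_injOn_of_eventually_eq_add_pow {f F : ℂ → ℂ} {x F' : ℂ} {U : Set ℂ} {n : ℕ}
    (hn : 2 ≤ n) (hU : U ∈ 𝓝 x) (hF : HasStrictDerivAt F F' x) (hF' : F' ≠ 0) (hFx : F x = 0)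
    (hfF : ∀ᶠ z in 𝓝 x, f z = f x + F z ^ n) : ¬ InjOn f U := by
  intro hinj
  set V := {z | z ∈ U ∧ f z = f x + F z ^ n}
  have hζ := Complex.isPrimitiveRoot_exp n (by omega)
  set ζ := Complex.exp (2 * π * I / n)
  have hV : ∀ᶠ w in 𝓝 (0 : ℂ), w ∈ F '' V := by
    rw [← hFx, ← hF.map_nhds_eq hF']
    exact image_mem_map (inter_mem hU hfF)
  have hζV : ∀ᶠ w in 𝓝 (0 : ℂ), ζ * w ∈ F '' V :=
    (continuous_const_mul ζ).tendsto' 0 0 (mul_zero ζ) hV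
  obtain ⟨w, ⟨⟨z₁, ⟨hz₁U, hz₁⟩, rfl⟩, ⟨z₂, ⟨hz₂U, hz₂⟩, hz₂w⟩⟩, hw⟩ :=
    (((hV.and hζV).filter_mono (nhdsWithin_le_nhds (s := {0}ᶜ))).and
      eventually_mem_nhdsWithin).exists
  have h12 : z₂ = z₁ := hinj hz₂U hz₁U (by rw [hz₁, hz₂, hz₂w, mul_pow, hζ.pow_eq_one, one_mul])
  rw [h12] at hz₂w
  exact hζ.ne_one (by omega) (mul_right_cancel₀ hw (hz₂w.symm.trans (one_mul _).symm))

theorem AnalyticAt.deriv_ne_zero_of_injOn {f : ℂ → ℂ} {x : ℂ} {U : Set ℂ}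
    (hf : AnalyticAt ℂ f x) (hU : U ∈ 𝓝 x) (hinj : InjOn f U) : deriv f x ≠ 0 := by
  intro hderiv
  have hsub : AnalyticAt ℂ (f · - f x) x := hf.sub analyticAt_const
  have hnonconst : ¬ ∀ᶠ z in 𝓝 x, f z - f x = 0 := by
    intro h
    obtain ⟨z, ⟨hz, hzU⟩, hzx⟩ :=
      (((h.and hU).filter_mono (nhdsWithin_le_nhds (s := {x}ᶜ))).and
        eventually_mem_nhdsWithin).exists
    exact hzx (hinj hzU (mem_of_mem_nhds hU) (sub_eq_zero.1 hz))
  obtain ⟨n, g, hg, hgx, hfg⟩ := hsub.exists_eventuallyEq_pow_smul_nonzero_iff.2 hnonconst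
  have hn : 2 ≤ n := by
    have horder := hf.analyticOrderAt_deriv_add_one
    rw [hsub.analyticOrderAt_eq_natCast.2 ⟨g, hg, hgx, hfg⟩] at horder
    have hpos : 1 ≤ analyticOrderAt (deriv f) x :=
      Order.one_le_iff_ne_zero.2 (analyticOrderAt_ne_zero.2 ⟨hf.deriv, hderiv⟩)
    have : ((2 : ℕ) : ℕ∞) ≤ n := by
      rw [← horder, Nat.cast_ofNat, ← one_add_one_eq_two]
      exact add_le_add_left hpos 1
    exact_mod_cast this
  obtain ⟨r, hr, hrx, hrg⟩ := hg.exists_analyticAt_pow_eq hgx (n := n) (by omega)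
  have hF : HasStrictDerivAt (fun z => (z - x) * r z) (r x) x := by
    have hlin : HasStrictDerivAt (fun z => z - x) 1 x := (hasStrictDerivAt_id x).sub_const x
    simpa using hlin.fun_mul hr.hasStrictDerivAt
  refine not_injOn_of_eventually_eq_add_pow hn hU hF hrx (by simp) ?_ hinj
  filter_upwards [hfg] with z hz
  rw [mul_pow, hrg, ← smul_eq_mul, ← hz]
  ring

lemma AnalyticAt.deriv_deriv_eq_two_mul_deriv_dslope {f : ℂ → ℂ} {x : ℂ}
    (hf : AnalyticAt ℂ f x) : deriv (deriv f) x = 2 * deriv (dslope f x) x := by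
  set ψ := dslope f x
  obtain ⟨p, hp⟩ := hf
  have hψ : AnalyticAt ℂ ψ x := hp.has_fpower_series_dslope_fslope.analyticAt
  have hfψ : f = fun z => f x + (z - x) * ψ z :=
    funext fun z => by rw [← smul_eq_mul, sub_smul_dslope, add_sub_cancel]
  have hderiv : deriv f =ᶠ[𝓝 x] fun z => ψ z + (z - x) * deriv ψ z := by
    filter_upwards [hψ.eventually_analyticAt] with z hz
    have hlin : HasDerivAt (fun z => z - x) 1 z := (hasDerivAt_id z).sub_const x
    rw [hfψ, ((hlin.fun_mul hz.differentiableAt.hasDerivAt).const_add (f x)).deriv, one_mul]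
  have hlin : HasDerivAt (fun z => z - x) 1 x := (hasDerivAt_id x).sub_const x
  rw [hderiv.deriv_eq, (hψ.differentiableAt.hasDerivAt.fun_add
    (hlin.fun_mul hψ.deriv.differentiableAt.hasDerivAt)).deriv]
  ring

lemma gammaExt_eq_log_norm_dslope (φ : ℂ → ℂ) (x y : ℂ) :
    gammaExt φ x y = 1 / (2 * π) * Real.log ‖dslope φ y x‖ -
      1 / (2 * π) * Real.log ‖1 - φ x * conj (φ y)‖ := by
  rcases eq_or_ne x y with rfl | hne
  · rw [gammaExt, if_pos rfl, robin, dslope_same, Complex.mul_conj', ← Complex.ofReal_pow,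
      ← Complex.ofReal_one, ← Complex.ofReal_sub, Complex.norm_real, Real.norm_eq_abs,
      Real.log_abs]
  · rw [gammaExt, if_neg hne, gammaReg, dslope_of_ne φ hne, slope_def_field, norm_div]

lemma one_sub_mul_conj_ne_zero {a b : ℂ} (ha : ‖a‖ < 1) (hb : ‖b‖ < 1) : 1 - a * conj b ≠ 0 := by
  rw [sub_ne_zero]
  intro h
  have := congrArg norm h
  rw [norm_one, norm_mul, Complex.norm_conj] at this
  nlinarith [norm_nonneg a, norm_nonneg b]

section Univalent

variable {Ω : Set ℂ} {φ : ℂ → ℂ}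

lemma dslope_ne_zero_of_injOn (hΩ : IsOpen Ω) (hφ : DifferentiableOn ℂ φ Ω) (hinj : InjOn φ Ω)
    {x y : ℂ} (hx : x ∈ Ω) (hy : y ∈ Ω) : dslope φ y x ≠ 0 := by
  rcases eq_or_ne x y with rfl | hne
  · rw [dslope_same]
    exact (hφ.analyticAt (hΩ.mem_nhds hx)).deriv_ne_zero_of_injOn (hΩ.mem_nhds hx) hinj
  · rw [dslope_of_ne φ hne, slope_def_field]
    exact div_ne_zero (sub_ne_zero.2 fun h => hne (hinj hx hy h)) (sub_ne_zero.2 hne)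

lemma hasFDerivAt_gammaExt (hΩ : IsOpen Ω) (hφ : DifferentiableOn ℂ φ Ω) (hinj : InjOn φ Ω)
    (hmaps : MapsTo φ Ω (Metric.ball 0 1)) {x y : ℂ} (hx : x ∈ Ω) (hy : y ∈ Ω) :
    HasFDerivAt (fun z => gammaExt φ z y)
      (reMulCLM (1 / (2 * π) * (deriv (dslope φ y) x / dslope φ y x +
        deriv φ x * conj (φ y) / (1 - φ x * conj (φ y))))) x := by
  have hlog₁ := (((Complex.differentiableOn_dslope (hΩ.mem_nhds hy)).2 hφ).differentiableAt
    (hΩ.mem_nhds hx)).hasDerivAt.hasFDerivAt_log_norm (dslope_ne_zero_of_injOn hΩ hφ hinj hx hy)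
  have hlog₂ := (((hφ.differentiableAt (hΩ.mem_nhds hx)).hasDerivAt.mul_const
    (conj (φ y))).const_sub 1).hasFDerivAt_log_norm
    (one_sub_mul_conj_ne_zero (mem_ball_zero_iff.1 (hmaps hx)) (mem_ball_zero_iff.1 (hmaps hy)))
  rw [show (fun z => gammaExt φ z y) = _ from funext fun z => gammaExt_eq_log_norm_dslope φ z y]
  convert hlog₁.const_mul_sub_const_mul_reMulCLM (1 / (2 * π)) hlog₂ using 2
  push_cast
  ring

lemma hasFDerivAt_robin (hΩ : IsOpen Ω) (hφ : DifferentiableOn ℂ φ Ω) (hinj : InjOn φ Ω)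
    (hmaps : MapsTo φ Ω (Metric.ball 0 1)) {x : ℂ} (hx : x ∈ Ω) :
    HasFDerivAt (robin φ)
      (reMulCLM (1 / (2 * π) * (deriv (deriv φ) x / deriv φ x +
        2 * conj (φ x) * deriv φ x / (1 - ‖φ x‖ ^ 2)))) x := by
  have hφx := hφ.analyticAt (hΩ.mem_nhds hx)
  have hlog₁ := hφx.deriv.differentiableAt.hasDerivAt.hasFDerivAt_log_norm
    (hφx.deriv_ne_zero_of_injOn (hΩ.mem_nhds hx) hinj)
  have hlog₂ := hφx.differentiableAt.hasDerivAt.hasFDerivAt_log_one_sub_norm_sq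
    (mem_ball_zero_iff.1 (hmaps hx)).ne
  unfold robin
  convert hlog₁.const_mul_sub_const_mul_reMulCLM (1 / (2 * π)) hlog₂ using 2
  push_cast
  ring

end Univalent

theorem stmt6_general (Ω : Set ℂ) (φ : ℂ → ℂ)
    (hopen : IsOpen Ω)
    (hdiff : DifferentiableOn ℂ φ Ω)
    (hbij : Set.BijOn φ Ω (Metric.ball 0 1)) :
    (∀ x ∈ Ω, ∀ y ∈ Ω, DifferentiableAt ℝ (fun x' => gammaExt φ x' y) x) ∧
      (∀ x ∈ Ω, grad (robin φ) x = 2 * grad (fun x' => gammaExt φ x' x) x) := by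
  refine ⟨fun x hx y hy =>
    (hasFDerivAt_gammaExt hopen hdiff hbij.injOn hbij.mapsTo hx hy).differentiableAt,
    fun x hx => ?_⟩
  rw [← Complex.conj_ofNat,
    grad_eq_conj_of_hasFDerivAt (hasFDerivAt_robin hopen hdiff hbij.injOn hbij.mapsTo hx),
    grad_eq_conj_of_hasFDerivAt (hasFDerivAt_gammaExt hopen hdiff hbij.injOn hbij.mapsTo hx hx),
    ← map_mul, dslope_same,
    (hdiff.analyticAt (hopen.mem_nhds hx)).deriv_deriv_eq_two_mul_deriv_dslope, Complex.mul_conj']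
  congr 1
  ring

/-- The extended function `γ_Ω` is differentiable in its first variable on `Ω × Ω`, and
`∇γ̃_Ω(x) = 2 ∇₁γ_Ω(x,x)`. -/
theorem stmt6 (Ω : Set ℂ) (φ : ℂ → ℂ)
    (hopen : IsOpen Ω) (hne : Ω ≠ Set.univ) (h0 : (0 : ℂ) ∈ Ω)
    (hconn : IsConnected Ω) (hsc : SimplyConnectedSpace ↥Ω)
    (hdiff : DifferentiableOn ℂ φ Ω)
    (hbij : Set.BijOn φ Ω (Metric.ball 0 1))
    (hφ0 : φ 0 = 0) :
    (∀ x ∈ Ω, ∀ y ∈ Ω, DifferentiableAt ℝ (fun x' => gammaExt φ x' y) x) ∧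
      (∀ x ∈ Ω, grad (robin φ) x = 2 * grad (fun x' => gammaExt φ x' x) x) :=
  stmt6_general Ω φ hopen hdiff hbij
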